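/- arXiv:2404.08072 — 3 statements merged into one kernel-verified Lean document; each statement's English description precedes it below -/
import Mathlib

section
/- Let A be a finite alphabet with at least two letters, u ∈ A⁺ a nonempty word, π a permutation of A, w a prefix of Pal(u), σ the w-conjugate of ψ_u ∘ π, and a_min the minimal letter of σ. Then σ(a_min) is a prefix of σ(a) for every a ∈ A if and only if (card A − 1)·(|w| + |σ(a_min)|) ≤ ‖σ‖ − card A. -/
open List

section EpiDefs

variable {A : Type*}

/-- The episturmian generator ψ_a : a ↦ a, b ↦ ab for b ≠ a, as a map on words. -/
def psiL [DecidableEq A] (a : A) : List A → List A :=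
  fun u => (u.map (fun b => if b = a then [a] else [a, b])).flatten

/-- The episturmian generator ψ̄_a : a ↦ a, b ↦ ba for b ≠ a, as a map on words. -/
def psibarL [DecidableEq A] (a : A) : List A → List A :=
  fun u => (u.map (fun b => if b = a then [a] else [b, a])).flatten

/-- ψ_{u₁⋯uₙ} = ψ_{u₁} ∘ ⋯ ∘ ψ_{uₙ}. -/
def psiW [DecidableEq A] (u : List A) : List A → List A :=
  u.foldr (fun a f => psiL a ∘ f) id

/-- ψ̄_{u₁⋯uₙ} = ψ̄_{u₁} ∘ ⋯ ∘ ψ̄_{uₙ}. -/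
def psibarW [DecidableEq A] (u : List A) : List A → List A :=
  u.foldr (fun a f => psibarL a ∘ f) id

/-- There is a shortest palindrome having `x` as a prefix. -/
theorem exists_isPalClosure (x : List A) :
    ∃ p : List A, (p.reverse = p ∧ x <+: p) ∧
      ∀ q : List A, q.reverse = q → x <+: q → p.length ≤ q.length := by
  classical
  have hex : ∃ n : ℕ, ∃ p : List A, (p.reverse = p ∧ x <+: p) ∧ p.length = n :=
    ⟨(x ++ x.reverse).length, x ++ x.reverse, ⟨by simp, ⟨x.reverse, rfl⟩⟩, rfl⟩
  obtain ⟨p, hp, hlen⟩ := Nat.find_spec hex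
  refine ⟨p, hp, fun q h1 h2 => ?_⟩
  rw [hlen]
  exact Nat.find_le ⟨q, ⟨h1, h2⟩, rfl⟩

/-- `palPlus x = x⁽⁺⁾` is the shortest palindrome having `x` as a prefix. -/
noncomputable def palPlus (x : List A) : List A :=
  Classical.choose (exists_isPalClosure x)

/-- Iterated palindromic closure: Pal(ε) = ε, Pal(ua) = (Pal(u)a)⁽⁺⁾. -/
noncomputable def pal (u : List A) : List A :=
  u.foldl (fun p a => palPlus (p ++ [a])) []

/-- Longest common prefix. -/
def gcp [DecidableEq A] : List A → List A → List A
  | a :: x, b :: y => if a = b then a :: gcp x y else []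
  | _, _ => []

/-- Longest common suffix. -/
def gcs [DecidableEq A] (x y : List A) : List A :=
  (gcp x.reverse y.reverse).reverse

/-- The language of a (primitive) substitution: factors of σⁿ(a). -/
def LangS (σ : List A → List A) : Set (List A) :=
  {x | ∃ (n : ℕ) (a : A), x <:+: σ^[n] [a]}

/-- The language of the episturmian shift directed by `d`. -/
def LangD (d : ℕ → A) : Set (List A) :=
  {x | ∃ n : ℕ, x <:+: pal ((List.range n).map d)}

def LeftSpecial (L : Set (List A)) (v : List A) : Prop :=
  ∃ a b : A, a ≠ b ∧ a :: v ∈ L ∧ b :: v ∈ L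

def RightSpecial (L : Set (List A)) (v : List A) : Prop :=
  ∃ a b : A, a ≠ b ∧ v ++ [a] ∈ L ∧ v ++ [b] ∈ L

/-- The left return set of `u` in the language `L`. -/
def leftReturn (L : Set (List A)) (u : List A) : Set (List A) :=
  {r | r ++ u ∈ L ∧ (∃ s : List A, s ≠ [] ∧ r ++ u = u ++ s) ∧
    ¬∃ p q : List A, p ≠ [] ∧ q ≠ [] ∧ r ++ u = p ++ u ++ q}

/-- The right return set of `u` in the language `L`. -/
def rightReturn (L : Set (List A)) (u : List A) : Set (List A) :=
  {r | u ++ r ∈ L ∧ (∃ p : List A, p ≠ [] ∧ u ++ r = p ++ u) ∧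
    ¬∃ p q : List A, p ≠ [] ∧ q ≠ [] ∧ u ++ r = p ++ u ++ q}

/-- `σ` is an endomorphism of the free monoid A*. -/
def IsListHom (σ : List A → List A) : Prop :=
  ∀ x y : List A, σ (x ++ y) = σ x ++ σ y

/-- Primitivity of a substitution. -/
def IsPrimitiveSubst (σ : List A → List A) : Prop :=
  ∃ k : ℕ, 1 ≤ k ∧ ∀ a b : A, b ∈ σ^[k] [a]

/-- At least two distinct letters occur infinitely often in `d`. -/
def NonDegenerate (d : ℕ → A) : Prop :=
  ∃ a b : A, a ≠ b ∧ (∀ N : ℕ, ∃ n : ℕ, N ≤ n ∧ d n = a) ∧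
    (∀ N : ℕ, ∃ n : ℕ, N ≤ n ∧ d n = b)

end EpiDefs

namespace EpiAux
variable {A : Type*} [DecidableEq A] {a b c : A} {x y s t : List A}

lemma psiL_nil (a : A) : psiL a [] = [] := rfl
lemma psibarL_nil (a : A) : psibarL a [] = [] := rfl

lemma psiL_cons (a b : A) (x : List A) :
    psiL a (b :: x) = (if b = a then [a] else [a, b]) ++ psiL a x := by
  simp [psiL]

lemma psibarL_cons (a b : A) (x : List A) :
    psibarL a (b :: x) = (if b = a then [a] else [b, a]) ++ psibarL a x := by
  simp [psibarL]

lemma psiL_append (a : A) (x y : List A) : psiL a (x ++ y) = psiL a x ++ psiL a y := by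
  simp [psiL]

lemma psibarL_append (a : A) (x y : List A) :
    psibarL a (x ++ y) = psibarL a x ++ psibarL a y := by
  simp [psibarL]

lemma length_psibarL (a : A) (x : List A) : (psibarL a x).length = (psiL a x).length := by
  induction x with
  | nil => rfl
  | cons b x ih =>
    rw [psiL_cons, psibarL_cons]
    by_cases h : b = a <;> simp [h, ih]

/-- I1 : ψ_a(x)·a = a·ψ̄_a(x) -/
lemma psiL_concat (a : A) (x : List A) : psiL a x ++ [a] = a :: psibarL a x := by
  induction x with
  | nil => rfl
  | cons b x ih =>
    rw [psiL_cons, psibarL_cons]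
    by_cases h : b = a <;> simp [h] <;> simpa [h] using ih

/-- I2 : reverse (ψ_a x) = ψ̄_a (reverse x) -/
lemma reverse_psiL (a : A) (x : List A) : (psiL a x).reverse = psibarL a x.reverse := by
  induction x with
  | nil => rfl
  | cons b x ih =>
    rw [psiL_cons, reverse_append, ih, reverse_cons, psibarL_append]
    by_cases h : b = a <;> simp [h, psibarL_cons, psibarL_nil]

lemma length_psiL_reverse (a : A) (x : List A) :
    (psiL a x.reverse).length = (psiL a x).length := by
  rw [← length_psibarL, ← reverse_psiL, length_reverse]

lemma psiL_head (a : A) : ∀ (x : List A), x ≠ [] → ∃ r, psiL a x = a :: r := by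
  intro x hx
  match x, hx with
  | b :: x, _ =>
    rw [psiL_cons]
    by_cases h : b = a <;> simp [h]

lemma psiL_eq_nil_iff (a : A) (x : List A) : psiL a x = [] ↔ x = [] := by
  constructor
  · intro h
    by_contra hx
    obtain ⟨r, hr⟩ := psiL_head a x hx
    simp [hr] at h
  · rintro rfl; rfl

lemma psiL_injective (a : A) : Function.Injective (psiL a) := by
  intro x
  induction x with
  | nil => intro y h; exact ((psiL_eq_nil_iff a y).1 h.symm).symm
  | cons b x ih =>
    intro y h
    match y with
    | [] => simp [psiL_nil, psiL_eq_nil_iff] at h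
    | c :: y =>
      rw [psiL_cons, psiL_cons] at h
      by_cases hb : b = a <;> by_cases hc : c = a
      · rw [if_pos hb, if_pos hc] at h
        subst hb; subst hc
        simp only [singleton_append, cons.injEq, true_and] at h
        rw [ih h]
      · rw [if_pos hb, if_neg hc] at h
        simp only [singleton_append, cons_append, cons.injEq, true_and] at h
        obtain rfl | hx := eq_or_ne x []
        · rw [psiL_nil] at h; exact absurd h.symm (cons_ne_nil _ _)
        · obtain ⟨r, hr⟩ := psiL_head a x hx
          rw [hr] at h
          injection h with h1 _
          exact absurd h1.symm hc
      · rw [if_neg hb, if_pos hc] at h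
        simp only [singleton_append, cons_append, cons.injEq] at h
        obtain ⟨h1, h2⟩ := h
        obtain rfl | hy := eq_or_ne y []
        · simp [psiL_nil] at h2
        · obtain ⟨r, hr⟩ := psiL_head a y hy
          rw [hr] at h2
          injection h2 with h3 _
          exact absurd h3 hb
      · rw [if_neg hb, if_neg hc] at h
        simp only [cons_append, singleton_append, cons.injEq, true_and] at h
        obtain ⟨rfl, h2⟩ := h
        rw [ih h2]

-- palindrome / suffix helpers
lemma pal_head_last {t : List A} (hpal : t.reverse = t) {d c : A} {r q : List A}
    (h1 : t = d :: r) (h2 : t = q ++ [c]) : d = c := by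
  have h3 : t.reverse = c :: q.reverse := by rw [h2, reverse_append, reverse_singleton]; rfl
  rw [hpal, h1] at h3
  exact (List.cons.injEq _ _ _ _ ▸ h3).1

lemma suffix_concat_ne {t W : List A} {c : A} (h : t <:+ W ++ [c]) (hne : t ≠ []) :
    ∃ q, t = q ++ [c] := by
  obtain ⟨d, hd⟩ := h
  rcases eq_nil_or_concat t with rfl | ⟨t₁, e, rfl⟩
  · exact absurd rfl hne
  · rw [concat_eq_append, ← append_assoc] at hd
    obtain ⟨-, h2⟩ := append_inj' hd rfl
    injection h2 with h3
    exact ⟨t₁, by rw [concat_eq_append, h3]⟩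

lemma psi_concat_pal_iff (a : A) (y : List A) :
    ((psiL a y ++ [a]).reverse = psiL a y ++ [a]) ↔ y.reverse = y := by
  rw [reverse_append, reverse_singleton, reverse_psiL, singleton_append, ← psiL_concat a y.reverse]
  constructor
  · intro h
    have h2 : psiL a y.reverse = psiL a y := by
      apply append_inj_left h
      simp [length_psiL_reverse]
    exact psiL_injective a h2
  · intro h; rw [h]

lemma suffix_psibar {a : A} {s x : List A} (h : s <:+ psibarL a x) (hs : s ≠ []) :
    (∃ y, y <:+ x ∧ s = a :: psibarL a y) ∨
    (∃ b y, b ≠ a ∧ (b :: y) <:+ x ∧ s = b :: a :: psibarL a y) := by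
  induction x with
  | nil => rw [psibarL_nil] at h; exact absurd (eq_nil_of_suffix_nil h) hs
  | cons b x ih =>
    rw [psibarL_cons] at h
    by_cases hb : b = a
    · rw [if_pos hb, singleton_append, suffix_cons_iff] at h
      rcases h with rfl | h
      · exact Or.inl ⟨x, suffix_cons b x, by rw [← hb]⟩
      · rcases ih h with ⟨y, hy, rfl⟩ | ⟨e, y, he, hy, rfl⟩
        · exact Or.inl ⟨y, hy.trans (suffix_cons b x), rfl⟩
        · exact Or.inr ⟨e, y, he, hy.trans (suffix_cons b x), rfl⟩
    · rw [if_neg hb, cons_append, singleton_append, suffix_cons_iff] at h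
      rcases h with rfl | h
      · exact Or.inr ⟨b, x, hb, suffix_rfl, rfl⟩
      rw [suffix_cons_iff] at h
      rcases h with rfl | h
      · exact Or.inl ⟨x, suffix_cons b x, rfl⟩
      · rcases ih h with ⟨y, hy, rfl⟩ | ⟨e, y, he, hy, rfl⟩
        · exact Or.inl ⟨y, hy.trans (suffix_cons b x), rfl⟩
        · exact Or.inr ⟨e, y, he, hy.trans (suffix_cons b x), rfl⟩

lemma suffix_psi {a : A} {s x : List A} (h : s <:+ psiL a x) (hs : s ≠ []) :
    (∃ y, y <:+ x ∧ y ≠ [] ∧ s = psiL a y) ∨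
    (∃ b y, b ≠ a ∧ (b :: y) <:+ x ∧ s = b :: psiL a y) := by
  induction x with
  | nil => rw [psiL_nil] at h; exact absurd (eq_nil_of_suffix_nil h) hs
  | cons b x ih =>
    rw [psiL_cons] at h
    by_cases hb : b = a
    · rw [if_pos hb, singleton_append, suffix_cons_iff] at h
      rcases h with rfl | h
      · refine Or.inl ⟨b :: x, suffix_rfl, cons_ne_nil _ _, ?_⟩
        rw [psiL_cons, if_pos hb, singleton_append, ← hb]
      · rcases ih h with ⟨y, hy, hyne, rfl⟩ | ⟨e, y, he, hy, rfl⟩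
        · exact Or.inl ⟨y, hy.trans (suffix_cons b x), hyne, rfl⟩
        · exact Or.inr ⟨e, y, he, hy.trans (suffix_cons b x), rfl⟩
    · rw [if_neg hb, cons_append, singleton_append, suffix_cons_iff] at h
      rcases h with rfl | h
      · refine Or.inl ⟨b :: x, suffix_rfl, cons_ne_nil _ _, ?_⟩
        rw [psiL_cons, if_neg hb]; rfl
      rw [suffix_cons_iff] at h
      rcases h with rfl | h
      · exact Or.inr ⟨b, x, hb, suffix_rfl, rfl⟩
      · rcases ih h with ⟨y, hy, hyne, rfl⟩ | ⟨e, y, he, hy, rfl⟩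
        · exact Or.inl ⟨y, hy.trans (suffix_cons b x), hyne, rfl⟩
        · exact Or.inr ⟨e, y, he, hy.trans (suffix_cons b x), rfl⟩

/-- C1: palindromic suffixes of ψ_a(x)·a. -/
lemma pal_suffix_psi_concat {a : A} {t x : List A} (ht : t <:+ psiL a x ++ [a])
    (hpal : t.reverse = t) (hne : t ≠ []) :
    ∃ y, y <:+ x ∧ y.reverse = y ∧ t = psiL a y ++ [a] := by
  rw [psiL_concat, suffix_cons_iff] at ht
  rcases ht with rfl | ht
  · refine ⟨x, suffix_rfl, ?_, (psiL_concat a x).symm⟩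
    rw [← psi_concat_pal_iff a x, psiL_concat]
    exact hpal
  · rcases suffix_psibar ht hne with ⟨y, hy, rfl⟩ | ⟨b, y, hb, hy, rfl⟩
    · refine ⟨y, hy, ?_, (psiL_concat a y).symm⟩
      rw [← psi_concat_pal_iff a y, psiL_concat]
      exact hpal
    · exfalso
      apply hb
      refine pal_head_last hpal rfl (q := b :: psiL a y) ?_
      show b :: a :: psibarL a y = (b :: psiL a y) ++ [a]
      rw [cons_append, psiL_concat]

/-- C2: palindromic suffixes of ψ_a(x) for x ending with c ≠ a. -/
lemma pal_suffix_psi_last {a c : A} {t x' : List A} (hc : c ≠ a)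
    (ht : t <:+ psiL a (x' ++ [c])) (hpal : t.reverse = t) (hne : t ≠ []) :
    ∃ z, z <:+ (x' ++ [c]) ∧ z ≠ [] ∧ z.reverse = z ∧ a :: t = psiL a z := by
  have hxc : psiL a (x' ++ [c]) = (psiL a x' ++ [a]) ++ [c] := by
    simp [psiL_append, psiL_cons, if_neg hc, psiL_nil]
  have hend : ∃ q, t = q ++ [c] := suffix_concat_ne (hxc ▸ ht) hne
  obtain ⟨q, hq⟩ := hend
  rcases suffix_psi ht hne with ⟨y, hy, hyne, rfl⟩ | ⟨b, y, hb, hy, rfl⟩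
  · exfalso
    obtain ⟨r, hr⟩ := psiL_head a y hyne
    exact hc (pal_head_last hpal hr hq).symm
  · have hbc : b = c := pal_head_last hpal rfl hq
    subst hbc
    refine ⟨b :: y, hy, cons_ne_nil _ _, ?_, ?_⟩
    · apply psiL_injective a
      show psiL a (b :: y).reverse = psiL a (b :: y)
      calc psiL a (b :: y).reverse
          = psiL a (y.reverse ++ [b]) := by rw [reverse_cons]
        _ = (psiL a y.reverse ++ [a]) ++ [b] := by
            simp [psiL_append, psiL_cons, if_neg hb, psiL_nil]
        _ = (a :: psibarL a y.reverse) ++ [b] := by rw [psiL_concat]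
        _ = a :: ((psiL a y).reverse ++ [b]) := by rw [← reverse_psiL]; rfl
        _ = a :: (b :: psiL a y).reverse := by rw [reverse_cons]
        _ = a :: (b :: psiL a y) := by rw [hpal]
        _ = psiL a (b :: y) := by rw [psiL_cons, if_neg hb]; rfl
    · rw [psiL_cons, if_neg hb]; rfl

-- palPlus spec
lemma palPlus_palindrome (x : List A) : (palPlus x).reverse = palPlus x :=
  (Classical.choose_spec (exists_isPalClosure x)).1.1

lemma palPlus_prefix (x : List A) : x <+: palPlus x :=
  (Classical.choose_spec (exists_isPalClosure x)).1.2

lemma palPlus_min {x : List A} {q : List A} (h1 : q.reverse = q) (h2 : x <+: q) :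
    (palPlus x).length ≤ q.length :=
  (Classical.choose_spec (exists_isPalClosure x)).2 q h1 h2

lemma palPlus_eq_self {q : List A} (h : q.reverse = q) : palPlus q = q :=
  ((palPlus_prefix q).eq_of_length_le (palPlus_min h prefix_rfl)).symm

lemma length_palPlus_le {x : List A} (hx : x ≠ []) :
    (palPlus x).length ≤ 2 * x.length - 1 := by
  rcases eq_nil_or_concat x with rfl | ⟨q, d, rfl⟩
  · exact absurd rfl hx
  · rw [concat_eq_append]
    have hp : ((q ++ [d]) ++ q.reverse).reverse = (q ++ [d]) ++ q.reverse := by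
      simp [reverse_append]
    have := palPlus_min hp ⟨q.reverse, rfl⟩
    simp only [length_append, length_reverse, length_singleton] at this ⊢
    omega

/-- Overlap lemma: a short palindrome with prefix x is determined. -/
lemma overlap {p x : List A} (hpal : p.reverse = p) (hpre : x <+: p)
    (hlen : p.length ≤ 2 * x.length) :
    p = x ++ (x.take (p.length - x.length)).reverse ∧
      (x.drop (p.length - x.length)).reverse = x.drop (p.length - x.length) := by
  obtain ⟨e, rfl⟩ := hpre
  have hk : e.length ≤ x.length := by
    have := (length_append (as := x) (bs := e)) ▸ hlen; omega
  have hlen' : (x ++ e).length - x.length = e.length := by simp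
  rw [hlen']
  have heq : e.reverse ++ x.reverse = x.take e.length ++ (x.drop e.length ++ e) := by
    have h1 : e.reverse ++ x.reverse = x ++ e := by
      rw [← reverse_append, hpal]
    rw [h1, ← append_assoc, take_append_drop]
  have h2 := append_inj heq (by simp [hk])
  obtain ⟨h3, h4⟩ := h2
  have h5 : e = (x.take e.length).reverse := by rw [← h3, reverse_reverse]
  constructor
  · rw [← h3, reverse_reverse]
  · have h6 : (x.drop e.length).reverse ++ (x.take e.length).reverse
        = x.drop e.length ++ (x.take e.length).reverse := by
      rw [← reverse_append, take_append_drop, h4, ← h3, reverse_reverse]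
    exact (append_inj h6 (by simp)).1

/-- Canonical form of the palindromic closure. -/
lemma palPlus_form {x : List A} (hx : x ≠ []) :
    ∃ s t : List A, x = s ++ t ∧ t ≠ [] ∧ t.reverse = t ∧ t <:+ x ∧
      palPlus x = s ++ (t ++ s.reverse) ∧
      (palPlus x).length = 2 * s.length + t.length := by
  have hxlen : 0 < x.length := length_pos_iff.2 hx
  have hub := length_palPlus_le hx
  have hlb := (palPlus_prefix x).length_le
  set k := (palPlus x).length - x.length with hkdef
  have hk : k ≤ x.length - 1 := by omega
  obtain ⟨h1, h2⟩ := overlap (palPlus_palindrome x) (palPlus_prefix x) (by omega)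
  refine ⟨x.take k, x.drop k, (take_append_drop k x).symm, ?_, h2, drop_suffix k x, ?_, ?_⟩
  · intro hnil
    have := congrArg List.length hnil
    simp only [length_drop, length_nil] at this
    omega
  · rw [h1, ← append_assoc]
    congr 1
    exact (take_append_drop k x).symm
  · rw [h1]
    have hkx : k ≤ x.length := by omega
    simp [length_take, min_eq_left hkx]
    omega

/-- Two short palindromes with the same prefix and length coincide. -/
lemma palPlus_unique {p q x : List A} (hp : p.reverse = p) (hq : q.reverse = q)
    (hxp : x <+: p) (hxq : x <+: q) (hlen : p.length = q.length)
    (hle : p.length ≤ 2 * x.length) : p = q := by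
  obtain ⟨e1, -⟩ := overlap hp hxp hle
  obtain ⟨e2, -⟩ := overlap hq hxq (hlen ▸ hle)
  rw [e1, e2, hlen]

/-- Criterion for computing palPlus. -/
lemma palPlus_eq_cand {X cand : List A} (hX : X ≠ [])
    (h1 : cand.reverse = cand) (h2 : X <+: cand)
    (h3 : cand.length ≤ 2 * X.length - 1)
    (h4 : ∀ t, t <:+ X → t.reverse = t → t ≠ [] → cand.length ≤ 2 * X.length - t.length) :
    palPlus X = cand := by
  have hXlen : 0 < X.length := length_pos_iff.2 hX
  have hmin := palPlus_min h1 h2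
  have hlb := (palPlus_prefix X).length_le
  obtain ⟨hform, hdrop⟩ := overlap (palPlus_palindrome X) (palPlus_prefix X) (by omega)
  set k := (palPlus X).length - X.length with hkdef
  have hk : k ≤ X.length - 1 := by omega
  have htne : X.drop k ≠ [] := by
    intro hnil
    have := congrArg List.length hnil
    simp only [length_drop, length_nil] at this
    omega
  have hlen_drop : (X.drop k).length = X.length - k := length_drop ..
  have h5 := h4 (X.drop k) (drop_suffix k X) hdrop htne
  rw [hlen_drop] at h5
  have hlen : (palPlus X).length = cand.length := by omega
  exact palPlus_unique (palPlus_palindrome X) h1 (palPlus_prefix X) h2 hlen (by omega)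

/-- Minimality-based decomposition: if `y` is a palindromic suffix of `x` and
`palPlus x = s ++ t ++ s.reverse`, then `t = d ++ y` for some `d`. -/
lemma decomp_min {x s t x₀ y : List A} (hst : x = s ++ t) (hx0 : x₀ ++ y = x)
    (hypal : y.reverse = y) (hlen : (palPlus x).length = 2 * s.length + t.length) :
    ∃ d, x₀ = s ++ d ∧ t = d ++ y := by
  have hw : (x₀ ++ (y ++ x₀.reverse)).reverse = x₀ ++ (y ++ x₀.reverse) := by
    simp [reverse_append, hypal, append_assoc]
  have hpre : x <+: x₀ ++ (y ++ x₀.reverse) := ⟨x₀.reverse, by rw [← hx0, append_assoc]⟩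
  have hminw := palPlus_min hw hpre
  rw [hlen] at hminw
  simp only [length_append, length_reverse] at hminw
  have hlx := congrArg List.length hst
  have hlx0 := congrArg List.length hx0
  simp only [length_append] at hlx hlx0
  have hsl : s.length ≤ x₀.length := by omega
  have hspre : s <+: x₀ :=
    prefix_of_prefix_length_le ⟨t, hst.symm⟩ ⟨y, hx0⟩ hsl
  obtain ⟨d, hd⟩ := hspre
  refine ⟨d, hd.symm, ?_⟩
  apply append_cancel_left (as := s)
  rw [← hst, ← append_assoc, hd, hx0]

/-- Key lemma (case of a last letter equal to `a`):
`(ψ_a(x)·a)⁺ = ψ_a(x⁺)·a`. -/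
lemma palPlus_psi_concat (a : A) (x : List A) :
    palPlus (psiL a x ++ [a]) = psiL a (palPlus x) ++ [a] := by
  rcases eq_or_ne x [] with rfl | hx
  · rw [psiL_nil, nil_append, palPlus_eq_self (show (([]:List A)).reverse = [] from rfl),
      psiL_nil, nil_append]
    exact palPlus_eq_self (by simp)
  · obtain ⟨s, t, hst, htne, htpal, htsuf, hform, hlen⟩ := palPlus_form hx
    have lX : (psiL a x ++ [a]).length = (psiL a s).length + (psiL a t).length + 1 := by
      rw [hst, psiL_append]; simp; omega
    have lcand : (psiL a (palPlus x) ++ [a]).length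
        = 2 * (psiL a s).length + (psiL a t).length + 1 := by
      rw [hform, psiL_append, psiL_append]
      simp [length_psiL_reverse]
      ring
    apply palPlus_eq_cand (by simp)
    · exact (psi_concat_pal_iff a (palPlus x)).2 (palPlus_palindrome x)
    · obtain ⟨r, hr⟩ := palPlus_prefix x
      rcases eq_or_ne r [] with rfl | hrne
      · rw [← hr, append_nil]
      · obtain ⟨r₂, hr₂⟩ := psiL_head a r hrne
        refine ⟨r₂ ++ [a], ?_⟩
        rw [← hr, psiL_append, hr₂]
        simp
    · rw [lcand, lX]; omega
    · intro t' hsuf hpal hne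
      obtain ⟨y, hysuf, hypal, rfl⟩ := pal_suffix_psi_concat hsuf hpal hne
      obtain ⟨x₀, hx0⟩ := hysuf
      obtain ⟨d, -, htd⟩ := decomp_min hst hx0 hypal hlen
      have l1 : (psiL a t).length = (psiL a d).length + (psiL a y).length := by
        rw [htd, psiL_append, length_append]
      have lt' : (psiL a y ++ [a]).length = (psiL a y).length + 1 := by simp
      rw [lcand, lX, lt']
      omega

/-- Key lemma (case of a last letter different from `a`):
`(ψ_a(x))⁺ = ψ_a(x⁺)·a` when `x` ends with `c ≠ a`. -/
lemma palPlus_psi_last {a c : A} (hc : c ≠ a) (x' : List A) :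
    palPlus (psiL a (x' ++ [c])) = psiL a (palPlus (x' ++ [c])) ++ [a] := by
  set x := x' ++ [c] with hxdef
  have hx : x ≠ [] := by simp [hxdef]
  obtain ⟨s, t, hst, htne, htpal, htsuf, hform, hlen⟩ := palPlus_form hx
  have lX : (psiL a x).length = (psiL a s).length + (psiL a t).length := by
    rw [hst, psiL_append]; simp
  have lcand : (psiL a (palPlus x) ++ [a]).length
      = 2 * (psiL a s).length + (psiL a t).length + 1 := by
    rw [hform, psiL_append, psiL_append]
    simp [length_psiL_reverse]
    ring
  have hXne : psiL a x ≠ [] := by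
    rw [Ne, psiL_eq_nil_iff]; exact hx
  -- t ends with c, so its psi-image has length ≥ 2
  obtain ⟨q, hq⟩ := suffix_concat_ne (hxdef ▸ htsuf) htne
  have lt2 : (psiL a t).length = (psiL a q).length + 2 := by
    rw [hq, psiL_append, psiL_cons, if_neg hc, psiL_nil]
    simp
  apply palPlus_eq_cand hXne
  · exact (psi_concat_pal_iff a (palPlus x)).2 (palPlus_palindrome x)
  · obtain ⟨r, hr⟩ := palPlus_prefix x
    exact ⟨psiL a r ++ [a], by rw [← hr, psiL_append a x r, append_assoc]⟩
  · rw [lcand, lX]; omega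
  · intro t' hsuf hpal hne
    obtain ⟨z, hzsuf, hzne, hzpal, hzt⟩ := pal_suffix_psi_last hc (hxdef ▸ hsuf) hpal hne
    obtain ⟨x₀, hx0⟩ := hzsuf
    obtain ⟨d, -, htd⟩ := decomp_min hst (hxdef ▸ hx0) hzpal hlen
    have l1 : (psiL a t).length = (psiL a d).length + (psiL a z).length := by
      rw [htd, psiL_append, length_append]
    have l2 : (psiL a z).length = t'.length + 1 := by
      rw [← hzt]; simp
    rw [lcand, lX]
    omega

-- pal basics
lemma pal_nil : pal ([] : List A) = [] := rfl

lemma pal_snoc (u : List A) (c : A) : pal (u ++ [c]) = palPlus (pal u ++ [c]) := by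
  simp [pal, foldl_concat]

lemma psiL_singleton (a c : A) : psiL a [c] = if c = a then [a] else [a, c] := by
  rw [psiL_cons, psiL_nil, append_nil]

/-- Justin's formula, one-letter version: Pal(a·v) = ψ_a(Pal v)·a. -/
lemma pal_cons (a : A) (v : List A) : pal (a :: v) = psiL a (pal v) ++ [a] := by
  induction v using List.reverseRecOn with
  | nil =>
    show pal ([] ++ [a]) = _
    rw [pal_snoc, pal_nil, nil_append, psiL_nil, nil_append]
    exact palPlus_eq_self (by simp)
  | append_singleton v c ih =>
    have h0 : a :: (v ++ [c]) = (a :: v) ++ [c] := rfl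
    rw [h0, pal_snoc, ih]
    by_cases hca : c = a
    · subst hca
      have h1 : psiL c (pal v) ++ [c] ++ [c] = psiL c (pal v ++ [c]) ++ [c] := by
        rw [psiL_append, psiL_singleton, if_pos rfl]
      rw [h1, palPlus_psi_concat, ← pal_snoc]
    · have h1 : psiL a (pal v) ++ [a] ++ [c] = psiL a (pal v ++ [c]) := by
        rw [psiL_append, psiL_singleton, if_neg hca, append_assoc]; rfl
      rw [h1, palPlus_psi_last hca, ← pal_snoc]

-- psiW basics
lemma psiW_nil (x : List A) : psiW ([] : List A) x = x := rfl

lemma psiW_cons (a : A) (u : List A) (x : List A) :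
    psiW (a :: u) x = psiL a (psiW u x) := rfl

lemma psiW_hom (u : List A) (x y : List A) :
    psiW u (x ++ y) = psiW u x ++ psiW u y := by
  induction u with
  | nil => rfl
  | cons a u ih => rw [psiW_cons, psiW_cons, psiW_cons, ih, psiL_append]

lemma psiW_snoc (u : List A) (c : A) (x : List A) :
    psiW (u ++ [c]) x = psiW u (psiL c x) := by
  induction u with
  | nil => rfl
  | cons a u ih => rw [cons_append, psiW_cons, psiW_cons, ih]

lemma psiW_single_ne_nil (u : List A) (b : A) : psiW u [b] ≠ [] := by
  induction u with
  | nil => simp [psiW_nil]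
  | cons a u ih =>
    rw [psiW_cons, Ne, psiL_eq_nil_iff]
    exact ih

/-- Justin's formula: Pal(u·b) = ψ_u(b)·Pal(u). -/
lemma pal_justin (u : List A) (b : A) : pal (u ++ [b]) = psiW u [b] ++ pal u := by
  induction u with
  | nil =>
    rw [nil_append, psiW_nil, pal_nil, append_nil]
    show pal ([] ++ [b]) = [b]
    rw [pal_snoc, pal_nil, nil_append]
    exact palPlus_eq_self (by simp)
  | cons a u ih =>
    have h0 : (a :: u) ++ [b] = a :: (u ++ [b]) := rfl
    rw [h0, pal_cons, ih, psiL_append, pal_cons, psiW_cons, append_assoc]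

/-- The sum identity ‖ψ_u‖ = (card A - 1)·|Pal u| + card A. -/
lemma sum_length_psiW [Fintype A] (u : List A) :
    ∑ b : A, (psiW u [b]).length
      = (Fintype.card A - 1) * (pal u).length + Fintype.card A := by
  induction u using List.reverseRecOn with
  | nil => simp [psiW_nil, pal_nil]
  | append_singleton u c ih =>
    obtain ⟨m, hm⟩ : ∃ m, Fintype.card A = m + 1 :=
      ⟨Fintype.card A - 1, (Nat.succ_pred_eq_of_pos (Fintype.card_pos_iff.2 ⟨c⟩)).symm⟩
    have hW : ∀ b : A, (psiW (u ++ [c]) [b]).length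
        = (psiW u [c]).length + (psiW u [b]).length - (if b = c then (psiW u [b]).length else 0) := by
      intro b
      rw [psiW_snoc, psiL_singleton]
      by_cases h : b = c
      · rw [if_pos h, if_pos h, h]; omega
      · rw [if_neg h, if_neg h]
        show (psiW u ([c] ++ [b])).length = _
        rw [psiW_hom, length_append]
        omega
    have key : (∑ b : A, (psiW (u ++ [c]) [b]).length) + (psiW u [c]).length
        = Fintype.card A * (psiW u [c]).length + ∑ b : A, (psiW u [b]).length := by
      have hptw : ∀ b : A, (psiW (u ++ [c]) [b]).length + (if b = c then (psiW u [c]).length else 0)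
          = (psiW u [c]).length + (psiW u [b]).length := by
        intro b
        rw [hW b]
        by_cases h : b = c
        · rw [if_pos h, if_pos h, h]; omega
        · rw [if_neg h, if_neg h]; omega
      calc (∑ b : A, (psiW (u ++ [c]) [b]).length) + (psiW u [c]).length
          = ∑ b : A, ((psiW (u ++ [c]) [b]).length + (if b = c then (psiW u [c]).length else 0)) := by
            rw [Finset.sum_add_distrib]
            congr 1
            simp
        _ = ∑ b : A, ((psiW u [c]).length + (psiW u [b]).length) := by
            exact Finset.sum_congr rfl fun b _ => hptw b
        _ = Fintype.card A * (psiW u [c]).length + ∑ b : A, (psiW u [b]).length := by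
            rw [Finset.sum_add_distrib, Finset.sum_const, Finset.card_univ, smul_eq_mul]
    have hpal : (pal (u ++ [c])).length = (psiW u [c]).length + (pal u).length := by
      rw [pal_justin, length_append]
    rw [hm] at ih ⊢
    rw [hpal]
    simp only [Nat.add_sub_cancel] at ih ⊢
    have h2 : (m + 1) * (psiW u [c]).length = m * (psiW u [c]).length + (psiW u [c]).length := by
      ring
    rw [hm, h2] at key
    have h3 : (∑ b : A, (psiW (u ++ [c]) [b]).length) = m * (psiW u [c]).length + ∑ b : A, (psiW u [b]).length := by
      omega
    rw [h3, ih, Nat.mul_add]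
    ring

end EpiAux

open EpiAux in
/-- σ(a_min) is a prefix of every σ(a) iff
`(|A|-1)·(|w| + |σ(a_min)|) ≤ ‖σ‖ - |A|`. -/
theorem minletter_prefix_iff {A : Type*} [Fintype A] [DecidableEq A]
    (hA : 1 < Fintype.card A) (u : List A) (hu : u ≠ []) (π : Equiv.Perm A)
    (w : List A) (hw : w <+: pal u)
    (σ : List A → List A) (hσhom : IsListHom σ)
    (hσ : ∀ a : A, psiW u [π a] ++ w = w ++ σ [a])
    (amin : A) (hmin : ∀ a : A, a ≠ amin → (σ [amin]).length < (σ [a]).length) :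
    (∀ a : A, σ [amin] <+: σ [a]) ↔
      (Fintype.card A - 1) * (w.length + (σ [amin]).length) ≤
        (∑ a : A, (σ [a]).length) - Fintype.card A := by
  classical
  have hlen : ∀ a : A, (σ [a]).length = (psiW u [π a]).length := by
    intro a
    have h := congrArg List.length (hσ a)
    simp only [length_append] at h
    omega
  have hm0 : (σ [amin]).length = (psiW u [π amin]).length := hlen amin
  have hple' : ∀ b : A, (σ [amin]).length ≤ (psiW u [b]).length := by
    intro b
    rcases eq_or_ne b (π amin) with rfl | hb
    · rw [hm0]
    · have ha : π.symm b ≠ amin := by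
        intro h
        apply hb
        rw [← h, Equiv.apply_symm_apply]
      have h2 := hmin (π.symm b) ha
      rw [hlen (π.symm b), Equiv.apply_symm_apply] at h2
      exact h2.le
  have hPb : ∀ b : A, pal u ++ [b] <+: psiW u [b] ++ pal u := by
    intro b
    rw [← pal_justin, pal_snoc]
    exact palPlus_prefix (pal u ++ [b])
  have hsum : ∑ a : A, (σ [a]).length
      = (Fintype.card A - 1) * (pal u).length + Fintype.card A := by
    calc ∑ a : A, (σ [a]).length = ∑ a : A, (psiW u [π a]).length :=
          Finset.sum_congr rfl fun a _ => hlen a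
      _ = ∑ b : A, (psiW u [b]).length := Equiv.sum_comp π fun b => (psiW u [b]).length
      _ = (Fintype.card A - 1) * (pal u).length + Fintype.card A := sum_length_psiW u
  have harith : ((Fintype.card A - 1) * (w.length + (σ [amin]).length) ≤
      (∑ a : A, (σ [a]).length) - Fintype.card A) ↔
      w.length + (σ [amin]).length ≤ (pal u).length := by
    rw [hsum, Nat.add_sub_cancel]
    constructor
    · intro h
      exact Nat.le_of_mul_le_mul_left h (by omega)
    · intro h
      exact Nat.mul_le_mul_left _ h
  rw [harith]
  constructor
  · intro hpre
    by_contra hcon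
    push_neg at hcon
    obtain ⟨a1, ha1⟩ := Fintype.exists_ne_of_one_lt_card hA amin
    set i := (pal u).length with hi
    have hval : ∀ a : A, ∀ (h : i < (psiW u [π a] ++ w).length),
        (psiW u [π a] ++ w)[i] = π a := by
      intro a h
      have hpre1 : psiW u [π a] ++ w <+: psiW u [π a] ++ pal u :=
        (prefix_append_right_inj _).2 hw
      have hψpos : 0 < (psiW u [π a]).length :=
        length_pos_iff.2 (psiW_single_ne_nil u (π a))
      have hiP : i < (psiW u [π a] ++ pal u).length := by
        rw [length_append]; omega
      have e1 : (psiW u [π a] ++ w)[i]'h = (psiW u [π a] ++ pal u)[i]'hiP :=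
        hpre1.getElem h
      have h2 : i < (pal u ++ [π a]).length := by simp [hi]
      have e2 : (pal u ++ [π a])[i]'h2 = (psiW u [π a] ++ pal u)[i]'hiP :=
        (hPb (π a)).getElem h2
      have e3 : (pal u ++ [π a])[i]'h2 = π a :=
        List.getElem_concat_length (l := pal u) (a := π a) (i := i) hi h2
      exact e1.trans (e2.symm.trans e3)
    have hlA : i < (psiW u [π amin] ++ w).length := by
      rw [length_append, ← hm0]; omega
    have hlB : i < (psiW u [π a1] ++ w).length := by
      rw [length_append]
      have := hple' (π a1)
      omega
    have hA1 : (psiW u [π amin] ++ w)[i]'hlA = π amin := hval amin hlA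
    have hA2 : (psiW u [π a1] ++ w)[i]'hlB = π a1 := hval a1 hlB
    have hp : psiW u [π amin] ++ w <+: psiW u [π a1] ++ w := by
      rw [hσ amin, hσ a1]
      exact (prefix_append_right_inj w).2 (hpre a1)
    have heq : (psiW u [π amin] ++ w)[i]'hlA = (psiW u [π a1] ++ w)[i]'hlB :=
      hp.getElem hlA
    rw [hA1, hA2] at heq
    exact ha1 (π.injective heq).symm
  · intro hle a
    have h1 : psiW u [π amin] ++ w <+: pal u := by
      apply prefix_of_prefix_length_le ((prefix_append_right_inj _).2 hw)
        ((prefix_append (pal u) [π amin]).trans (hPb (π amin)))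
      rw [length_append, ← hm0]
      omega
    have h2 : pal u <+: psiW u [π a] ++ pal u :=
      (prefix_append (pal u) [π a]).trans (hPb (π a))
    have h4 : psiW u [π a] ++ w <+: psiW u [π a] ++ pal u :=
      (prefix_append_right_inj _).2 hw
    have h5 : psiW u [π amin] ++ w <+: psiW u [π a] ++ w := by
      apply prefix_of_prefix_length_le (h1.trans h2) h4
      rw [length_append, length_append, ← hm0]
      have := hple' (π a)
      omega
    rw [hσ amin, hσ a] at h5
    exact (prefix_append_right_inj w).1 h5
end

section
/- Let A be a finite alphabet with at least two letters, u ∈ A⁺ a nonempty word, π a permutation of A, w a prefix of Pal(u), σ the w-conjugate of ψ_u ∘ π, and a_min the minimal letter of σ. Then 2·(card A − 1)·|σ(a_min)| ≤ ‖σ‖ − 1. -/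
open List

section MyAux
variable {A : Type*} [DecidableEq A]

lemma my_psiL_append (c : A) (x y : List A) : psiL c (x ++ y) = psiL c x ++ psiL c y := by
  simp [psiL]

lemma my_psiW_cons (b : A) (u : List A) (x : List A) :
    psiW (b :: u) x = psiL b (psiW u x) := rfl

lemma my_psiW_append_word (u : List A) (x y : List A) :
    psiW u (x ++ y) = psiW u x ++ psiW u y := by
  induction u with
  | nil => rfl
  | cons b u ih => simp [my_psiW_cons, ih, my_psiL_append]

lemma my_psiW_concat (u : List A) (c : A) (x : List A) :
    psiW (u ++ [c]) x = psiW u (psiL c x) := by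
  induction u with
  | nil => rfl
  | cons b u ih => simp [List.cons_append, my_psiW_cons, ih]

def vlen (u : List A) (a : A) : ℕ := (psiW u [a]).length

lemma vlen_nil (a : A) : vlen ([] : List A) a = 1 := rfl

lemma vlen_concat_self (u : List A) (c : A) : vlen (u ++ [c]) c = vlen u c := by
  simp [vlen, my_psiW_concat, psiL]

lemma vlen_concat_ne (u : List A) {a c : A} (h : a ≠ c) :
    vlen (u ++ [c]) a = vlen u c + vlen u a := by
  have h1 : psiL c [a] = [c] ++ [a] := by simp [psiL, h]
  rw [vlen, my_psiW_concat, h1, my_psiW_append_word, List.length_append, vlen, vlen, Nat.add_comm]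

lemma vlen_pos (u : List A) (a : A) : 1 ≤ vlen u a := by
  induction u using List.reverseRecOn generalizing a with
  | nil => simp [vlen_nil]
  | append_singleton u c0 ih =>
    by_cases h : a = c0
    · subst h; rw [vlen_concat_self]; exact ih _
    · rw [vlen_concat_ne u h]; have := ih c0; omega

lemma sum_vlen_concat [Fintype A] (u : List A) (c : A) :
    (∑ a : A, vlen (u ++ [c]) a) + vlen u c
      = (∑ a : A, vlen u a) + Fintype.card A * vlen u c := by
  have key : ∀ a : A, vlen (u ++ [c]) a + (if a = c then vlen u c else 0)
      = vlen u a + vlen u c := by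
    intro a
    by_cases h : a = c
    · subst h; simp [vlen_concat_self]
    · simp [h, vlen_concat_ne u h]; omega
  calc (∑ a : A, vlen (u ++ [c]) a) + vlen u c
      = ∑ a : A, (vlen (u ++ [c]) a + (if a = c then vlen u c else 0)) := by
        rw [Finset.sum_add_distrib]
        simp
    _ = ∑ a : A, (vlen u a + vlen u c) := by simp only [key]
    _ = (∑ a : A, vlen u a) + Fintype.card A * vlen u c := by
        rw [Finset.sum_add_distrib, Finset.sum_const, Finset.card_univ, smul_eq_mul]

lemma vlen_invariant [Fintype A] (u : List A) (c : A) :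
    (Fintype.card A - 1) * vlen u c + 1 ≤ ∑ a : A, vlen u a := by
  have hk : 1 ≤ Fintype.card A := Fintype.card_pos_iff.mpr ⟨c⟩
  induction u using List.reverseRecOn generalizing c with
  | nil =>
    simp only [vlen_nil, Finset.sum_const, Finset.card_univ, smul_eq_mul, mul_one]
    omega
  | append_singleton u c₀ ih =>
    have hS := sum_vlen_concat u c₀
    have hv := vlen_pos u c₀
    have hkv : Fintype.card A * vlen u c₀
        = (Fintype.card A - 1) * vlen u c₀ + vlen u c₀ := by
      have : vlen u c₀ ≤ Fintype.card A * vlen u c₀ := Nat.le_mul_of_pos_left _ hk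
      rw [Nat.sub_one_mul]; omega
    have ih0 := ih c₀
    by_cases h : c = c₀
    · subst h
      rw [vlen_concat_self]
      omega
    · rw [vlen_concat_ne u h, Nat.mul_add]
      have ihc := ih c
      omega

end MyAux

/-- `2·(|A|-1)·|σ(a_min)| ≤ ‖σ‖ - 1`. -/
theorem minletter_length_bound {A : Type*} [Fintype A] [DecidableEq A]
    (hA : 1 < Fintype.card A) (u : List A) (hu : u ≠ []) (π : Equiv.Perm A)
    (w : List A) (hw : w <+: pal u)
    (σ : List A → List A) (hσhom : IsListHom σ)
    (hσ : ∀ a : A, psiW u [π a] ++ w = w ++ σ [a])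
    (amin : A) (hmin : ∀ a : A, a ≠ amin → (σ [amin]).length < (σ [a]).length) :
    2 * (Fintype.card A - 1) * (σ [amin]).length ≤ (∑ a : A, (σ [a]).length) - 1 := by
  classical
  obtain ⟨u', c₀, rfl⟩ := (List.eq_nil_or_concat u).resolve_left hu
  rw [List.concat_eq_append] at hσ
  have hlen : ∀ a : A, (σ [a]).length = vlen (u' ++ [c₀]) (π a) := by
    intro a
    have h := congrArg List.length (hσ a)
    simp only [List.length_append] at h
    simp only [vlen]
    omega
  have hsum : (∑ a : A, (σ [a]).length) = ∑ a : A, vlen (u' ++ [c₀]) a := by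
    simp only [hlen]
    exact Fintype.sum_equiv π _ _ (fun a => rfl)
  have hc : vlen (u' ++ [c₀]) c₀ = vlen u' c₀ := vlen_concat_self u' c₀
  have hmono : vlen (u' ++ [c₀]) (π amin) ≤ vlen u' c₀ := by
    by_cases h : π amin = c₀
    · rw [h, hc]
    · have hne : π.symm c₀ ≠ amin := by
        intro he; apply h; rw [← he]; simp
      have h2 := hmin _ hne
      rw [hlen, hlen] at h2
      simp only [Equiv.apply_symm_apply] at h2
      omega
  have hinv := vlen_invariant u' c₀
  have hS := sum_vlen_concat u' c₀
  have hv := vlen_pos u' c₀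
  have hk : 1 ≤ Fintype.card A := by omega
  have hkv : Fintype.card A * vlen u' c₀
      = (Fintype.card A - 1) * vlen u' c₀ + vlen u' c₀ := by
    have : vlen u' c₀ ≤ Fintype.card A * vlen u' c₀ := Nat.le_mul_of_pos_left _ hk
    rw [Nat.sub_one_mul]; omega
  rw [hsum, hlen]
  have hm : 2 * (Fintype.card A - 1) * vlen (u' ++ [c₀]) (π amin)
      ≤ 2 * ((Fintype.card A - 1) * vlen u' c₀) := by
    calc 2 * (Fintype.card A - 1) * vlen (u' ++ [c₀]) (π amin)
        ≤ 2 * (Fintype.card A - 1) * vlen u' c₀ := Nat.mul_le_mul_left _ hmono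
      _ = 2 * ((Fintype.card A - 1) * vlen u' c₀) := by ring
  omega
end

section
/- Let A be a finite alphabet with at least two letters, u ∈ A⁺ a nonempty word, π a permutation of A, w a prefix of Pal(u), σ the w-conjugate of ψ_u ∘ π, and a_min the minimal letter of σ. Then either σ(a_min) is a suffix of σ(a) for every a ∈ A, or σ(a_min) is a prefix of σ(a) for every a ∈ A. -/
open List

/- ======================== Auxiliary development ======================== -/

section EpiAux

variable {A : Type*} [DecidableEq A]

theorem psiL_nil (a : A) : psiL a [] = [] := rfl

theorem psiL_append (a : A) (x y : List A) :
    psiL a (x ++ y) = psiL a x ++ psiL a y := by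
  simp [psiL]

theorem psiL_cons (a b : A) (x : List A) :
    psiL a (b :: x) = (if b = a then [a] else [a, b]) ++ psiL a x := by
  by_cases h : b = a <;> simp [psiL, h]

theorem psiL_singleton (a b : A) :
    psiL a [b] = if b = a then [a] else [a, b] := by
  by_cases h : b = a <;> simp [psiL, h]

theorem psiL_ne_nil (a : A) {x : List A} (hx : x ≠ []) : psiL a x ≠ [] := by
  cases x with
  | nil => exact absurd rfl hx
  | cons b t =>
    rw [psiL_cons]
    by_cases h : b = a <;> simp [h]

theorem psiL_head (a : A) {x : List A} (hx : x ≠ []) :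
    ∃ t, psiL a x = a :: t := by
  cases x with
  | nil => exact absurd rfl hx
  | cons b t =>
    rw [psiL_cons]
    by_cases h : b = a <;> simp [h]

theorem psiL_injOn (a : A) : ∀ x y : List A, psiL a x = psiL a y → x = y := by
  intro x
  induction x with
  | nil =>
    intro y h
    cases y with
    | nil => rfl
    | cons c y' => exact absurd h.symm (psiL_ne_nil a (by simp))
  | cons b x' ih =>
    intro y h
    cases y with
    | nil => exact absurd h (psiL_ne_nil a (by simp))
    | cons c y' =>
      rw [psiL_cons, psiL_cons] at h
      by_cases hb : b = a <;> by_cases hc : c = a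
      · rw [if_pos hb, if_pos hc] at h
        rw [hb, hc, ih _ (List.append_cancel_left h)]
      · rw [if_pos hb, if_neg hc] at h
        simp only [List.singleton_append, List.cons_append, List.nil_append,
          List.cons.injEq, true_and] at h
        exfalso
        rcases eq_or_ne x' [] with hx' | hx'
        · rw [hx', psiL_nil] at h; exact (List.cons_ne_nil _ _) h.symm
        · obtain ⟨t, ht⟩ := psiL_head a hx'
          rw [ht] at h
          injection h with h1 _
          exact hc h1.symm
      · rw [if_neg hb, if_pos hc] at h
        simp only [List.singleton_append, List.cons_append, List.nil_append,
          List.cons.injEq, true_and] at h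
        exfalso
        rcases eq_or_ne y' [] with hy' | hy'
        · rw [hy', psiL_nil] at h; exact (List.cons_ne_nil _ _) h
        · obtain ⟨t, ht⟩ := psiL_head a hy'
          rw [ht] at h
          injection h with h1 _
          exact hb h1
      · rw [if_neg hb, if_neg hc] at h
        simp only [List.cons_append, List.nil_append, List.cons.injEq, true_and] at h
        rw [h.1, ih _ h.2]

/-- Reversal lemma: (ψ_a(x)·a)ᴿ = ψ_a(xᴿ)·a. -/
theorem psiL_reverse (a : A) (x : List A) :
    (psiL a x ++ [a]).reverse = psiL a x.reverse ++ [a] := by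
  induction x with
  | nil => simp [psiL_nil]
  | cons b x' ih =>
    rw [psiL_cons, List.reverse_cons, psiL_append, List.append_assoc,
      List.reverse_append, ih]
    by_cases h : b = a <;> simp [h, psiL_singleton]

theorem psiL_length_le_of_suffix (a : A) {t z : List A} (h : t <:+ z) :
    (psiL a t).length ≤ (psiL a z).length := by
  obtain ⟨r, hr⟩ := h
  rw [← hr, psiL_append]
  simp

/-- Structure of nonempty suffixes of ψ_a-images. -/
theorem psiL_suffix (a : A) :
    ∀ (y : List A) {z : List A}, z <:+ psiL a y → z ≠ [] →
      ∃ t, t <:+ y ∧ psiL a t = (if z.head? = some a then z else a :: z) := by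
  intro y
  induction y with
  | nil =>
    intro z hz hne
    rw [psiL_nil, List.suffix_nil] at hz
    exact absurd hz hne
  | cons b y' ih =>
    intro z hz hne
    rw [psiL_cons] at hz
    by_cases hlen : z.length ≤ (psiL a y').length
    · have hz' : z <:+ psiL a y' := by
        obtain ⟨r, hr⟩ := hz
        have h2 : z <:+ (if b = a then [a] else [a, b]) ++ psiL a y' := ⟨r, hr⟩
        have h3 : psiL a y' <:+ (if b = a then [a] else [a, b]) ++ psiL a y' :=
          List.suffix_append _ _
        have := List.reverse_prefix.mpr h2
        have h4 := List.reverse_prefix.mpr h3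
        have h5 : z.reverse <+: (psiL a y').reverse :=
          prefix_of_prefix_length_le this h4 (by simpa using hlen)
        exact List.reverse_prefix.mp (by simpa using h5)
      obtain ⟨t, ht, htt⟩ := ih hz' hne
      exact ⟨t, ht.trans (List.suffix_cons b y'), htt⟩
    · obtain ⟨r, hr⟩ := hz
      have hlr : r.length + z.length
          = (if b = a then [a] else [a, b] : List A).length + (psiL a y').length := by
        have := congrArg List.length hr
        simpa using this
      by_cases hb : b = a
      · rw [if_pos hb] at hr hlr
        have hr0 : r = [] := by
          have : r.length = 0 := by simp at hlr; omega
          exact List.length_eq_zero_iff.mp this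
        rw [hr0, List.nil_append] at hr
        refine ⟨b :: y', List.suffix_refl _, ?_⟩
        have hhead : z.head? = some a := by rw [hr]; rfl
        rw [if_pos hhead, psiL_cons, if_pos hb, hr]
      · rw [if_neg hb] at hr hlr
        have hrlen : r.length ≤ 1 := by simp at hlr; omega
        match r, hr with
        | [], hr =>
          rw [List.nil_append] at hr
          refine ⟨b :: y', List.suffix_refl _, ?_⟩
          have hhead : z.head? = some a := by rw [hr]; rfl
          rw [if_pos hhead, psiL_cons, if_neg hb, hr]
        | [c], hr =>
          simp only [List.cons_append, List.nil_append, List.cons.injEq] at hr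
          obtain ⟨hc1, hz2⟩ := hr
          refine ⟨b :: y', List.suffix_refl _, ?_⟩
          have hhead : z.head? ≠ some a := by rw [hz2]; simp [hb]
          rw [if_neg hhead, psiL_cons, if_neg hb, hz2]
          rfl
        | c :: d :: r', hr =>
          exfalso
          have : (c :: d :: r').length ≤ 1 := hrlen
          simp at this

/- ---------------- psiW ---------------- -/

theorem psiW_nil (x : List A) : psiW ([] : List A) x = x := rfl

theorem psiW_cons (a : A) (v : List A) (x : List A) :
    psiW (a :: v) x = psiL a (psiW v x) := rfl

theorem psiW_concat (v : List A) (c : A) (x : List A) :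
    psiW (v ++ [c]) x = psiW v (psiL c x) := by
  induction v with
  | nil => rfl
  | cons d v' ih => simp [psiW_cons, List.cons_append, ih]

theorem psiW_append (v : List A) (x y : List A) :
    psiW v (x ++ y) = psiW v x ++ psiW v y := by
  induction v with
  | nil => rfl
  | cons d v' ih => simp [psiW_cons, ih, psiL_append]

theorem psiW_ne_nil (v : List A) {x : List A} (hx : x ≠ []) : psiW v x ≠ [] := by
  induction v with
  | nil => exact hx
  | cons d v' ih => exact psiL_ne_nil d ih

/- ---------------- palPlus ---------------- -/

theorem palPlus_spec (x : List A) :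
    ((palPlus x).reverse = palPlus x ∧ x <+: palPlus x) ∧
      ∀ q : List A, q.reverse = q → x <+: q → (palPlus x).length ≤ q.length :=
  Classical.choose_spec (exists_isPalClosure x)

theorem palPlus_palindrome (x : List A) : (palPlus x).reverse = palPlus x :=
  (palPlus_spec x).1.1

theorem prefix_palPlus (x : List A) : x <+: palPlus x :=
  (palPlus_spec x).1.2

theorem palPlus_min (x : List A) {q : List A} (hq : q.reverse = q) (hx : x <+: q) :
    (palPlus x).length ≤ q.length :=
  (palPlus_spec x).2 q hq hx

/-- Structure of a palindrome with prefix x of length ≤ 2|x|. -/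
theorem pal_prefix_structure {x q : List A} (hq : q.reverse = q) (hp : x <+: q)
    (hs : q.length ≤ 2 * x.length) :
    q = x ++ (x.take (q.length - x.length)).reverse := by
  obtain ⟨y, hy⟩ := hp
  have hxl : x.length ≤ q.length := by rw [← hy]; simp
  have hyl : y.length = q.length - x.length := by
    have := congrArg List.length hy; simp at this; omega
  have hyx : y.length ≤ x.length := by omega
  have h1 : y = q.drop x.length := by rw [← hy]; simp
  have h2 : y.reverse = q.reverse.take (q.length - x.length) := by
    rw [h1, List.reverse_drop]
  rw [hq] at h2
  have h3 : q.take (q.length - x.length) = x.take (q.length - x.length) := by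
    rw [← hyl, ← hy, List.take_append_of_le_length hyx]
  rw [h3] at h2
  have h4 : y = (x.take (q.length - x.length)).reverse := by
    rw [← h2, List.reverse_reverse]
  rw [h4] at hy
  exact hy.symm

/-- A palindrome containing x as a prefix, of length ≤ 2|x|, is determined by its length. -/
theorem pal_prefix_eq_of_length {x q₁ q₂ : List A}
    (h₁ : q₁.reverse = q₁) (h₂ : q₂.reverse = q₂)
    (p₁ : x <+: q₁) (p₂ : x <+: q₂) (hl : q₁.length = q₂.length)
    (hsmall : q₁.length ≤ 2 * x.length) : q₁ = q₂ := by
  rw [pal_prefix_structure h₁ p₁ hsmall, pal_prefix_structure h₂ p₂ (hl ▸ hsmall), hl]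

/-- cl(x,z) for a palindromic suffix z of x. -/
theorem cl_palindrome {x z : List A} (hz : z <:+ x) (hpal : z.reverse = z) :
    (x ++ (x.take (x.length - z.length)).reverse).reverse
        = x ++ (x.take (x.length - z.length)).reverse ∧
      ((x ++ (x.take (x.length - z.length)).reverse)).length = 2 * x.length - z.length := by
  obtain ⟨s, hs⟩ := hz
  have hsl : s.length = x.length - z.length := by
    have := congrArg List.length hs; simp at this; omega
  have hzl : z.length ≤ x.length := by
    have := congrArg List.length hs; simp at this; omega
  have hst : x.take (x.length - z.length) = s := by
    rw [← hsl, ← hs]; simp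
  constructor
  · rw [hst, ← hs]
    simp [hpal]
  · rw [hst]
    simp; omega

theorem palPlus_min_of_pal_suffix {x z : List A} (hz : z <:+ x) (hpal : z.reverse = z) :
    (palPlus x).length ≤ 2 * x.length - z.length := by
  obtain ⟨h1, h2⟩ := cl_palindrome hz hpal
  have := palPlus_min x h1 ⟨(x.take (x.length - z.length)).reverse, rfl⟩
  omega

/-- Decomposition of a palindrome with prefix x, shorter than 2|x|. -/
theorem pal_decomp {x q : List A} (hq : q.reverse = q) (hp : x <+: q)
    (hs : q.length < 2 * x.length) :
    ∃ s z : List A, x = s ++ z ∧ z.reverse = z ∧ q = s ++ z ++ s.reverse ∧ z ≠ [] := by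
  have hxl : x.length ≤ q.length := hp.length_le
  set n := q.length - x.length with hn
  have hnx : n < x.length := by omega
  have hstr := pal_prefix_structure hq hp (le_of_lt hs)
  refine ⟨x.take n, x.drop n, (List.take_append_drop _ _).symm, ?_, ?_, ?_⟩
  · -- palindromicity of the middle
    have hq2 : q = x.take n ++ x.drop n ++ (x.take n).reverse := by
      rw [← List.take_append_drop n x] at hstr
      rw [hstr]
      congr 1
      rw [List.take_append_of_le_length (by simp; omega)]
      simp [Nat.min_eq_left (le_of_lt hnx)]; omega
    have hqrev : q.reverse = x.take n ++ (x.drop n).reverse ++ (x.take n).reverse := by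
      rw [hq2]; simp
    rw [hq] at hqrev
    have := hq2.symm.trans hqrev
    rw [List.append_assoc, List.append_assoc] at this
    have h5 := List.append_cancel_left this
    exact (List.append_cancel_right h5).symm
  · have hq2 : q = x.take n ++ x.drop n ++ (x.take n).reverse := by
      rw [← List.take_append_drop n x] at hstr
      rw [hstr]
      congr 1
      rw [List.take_append_of_le_length (by simp; omega)]
      simp [Nat.min_eq_left (le_of_lt hnx)]; omega
    exact hq2
  · intro hnil
    have := congrArg List.length hnil
    simp at this
    omega

theorem palPlus_of_palindrome {x : List A} (hx : x.reverse = x) : palPlus x = x := by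
  have h1 := palPlus_min x hx (List.prefix_refl x)
  exact ((prefix_palPlus x).eq_of_length_le h1).symm

theorem palPlus_length_le {x : List A} (hx : x ≠ []) :
    (palPlus x).length ≤ 2 * x.length - 1 := by
  have hz : [x.getLast hx] <:+ x := by
    conv_rhs => rw [← List.dropLast_append_getLast hx]
    exact ⟨x.dropLast, rfl⟩
  have := palPlus_min_of_pal_suffix hz (by simp)
  simpa using this

theorem suffix_of_suffix_length_le {l₁ l₂ l₃ : List A} (h₁ : l₁ <:+ l₃) (h₂ : l₂ <:+ l₃)
    (h : l₁.length ≤ l₂.length) : l₁ <:+ l₂ := by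
  have p₁ : l₁.reverse <+: l₃.reverse := List.reverse_prefix.mpr h₁
  have p₂ : l₂.reverse <+: l₃.reverse := List.reverse_prefix.mpr h₂
  have := prefix_of_prefix_length_le p₁ p₂ (by simpa using h)
  exact List.reverse_prefix.mp (by simpa using this)

theorem pal_nil : pal ([] : List A) = [] := rfl

theorem pal_concat (v : List A) (b : A) :
    pal (v ++ [b]) = palPlus (pal v ++ [b]) := by
  simp [pal, List.foldl_append]

theorem pal_palindrome (v : List A) : (pal v).reverse = pal v := by
  induction v using List.reverseRecOn with
  | nil => rfl
  | append_singleton v b ih => rw [pal_concat]; exact palPlus_palindrome _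

theorem pal_prefix_concat (v : List A) (b : A) : pal v <+: pal (v ++ [b]) := by
  rw [pal_concat]
  exact (List.prefix_append _ [b]).trans (prefix_palPlus _)

/-- Minimality criterion for identifying palPlus. -/
theorem palPlus_eq_of_bound {x₀ C : List A} {N : ℕ}
    (hCpal : C.reverse = C) (hpre : x₀ <+: C)
    (hClen : C.length + N = 2 * x₀.length)
    (hbound : ∀ z₁ : List A, z₁ <:+ x₀ → z₁.reverse = z₁ → z₁ ≠ [] → z₁.length ≤ N) :
    palPlus x₀ = C := by
  have hmin : ∀ q' : List A, q'.reverse = q' → x₀ <+: q' → C.length ≤ q'.length := by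
    intro q' hq' hpf
    by_cases hbig : 2 * x₀.length ≤ q'.length
    · omega
    · obtain ⟨s₁, z₁, hs₁, hz₁pal, hq'd, hz₁ne⟩ := pal_decomp hq' hpf (by omega)
      have h1 := hbound z₁ ⟨s₁, hs₁.symm⟩ hz₁pal hz₁ne
      have h2 : q'.length = s₁.length + z₁.length + s₁.length := by rw [hq'd]; simp; omega
      have h3 : x₀.length = s₁.length + z₁.length := by rw [hs₁]; simp
      omega
  have hle := palPlus_min x₀ hCpal hpre
  have hge := hmin (palPlus x₀) (palPlus_palindrome x₀) (prefix_palPlus x₀)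
  exact pal_prefix_eq_of_length (palPlus_palindrome x₀) hCpal (prefix_palPlus x₀) hpre
    (le_antisymm hle hge) (by omega)

/-- The key lemma: palindromic closure commutes with ψ_a. -/
theorem key_palPlus (a b : A) {p : List A} (hp : p.reverse = p) :
    palPlus (psiL a p ++ [a] ++ [b]) = psiL a (palPlus (p ++ [b])) ++ [a] := by
  set x : List A := p ++ [b] with hxdef
  set q : List A := palPlus x with hqdef
  have hqpal : q.reverse = q := palPlus_palindrome x
  have hqpre : x <+: q := prefix_palPlus x
  have hxne : x ≠ [] := by simp [hxdef]
  have hxlen : 1 ≤ x.length := List.length_pos_iff.mpr hxne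
  have hqlen : q.length < 2 * x.length := by
    have := palPlus_length_le hxne
    rw [← hqdef] at this
    omega
  obtain ⟨s, z, hsz, hzpal, hqd, hzne⟩ := pal_decomp hqpal hqpre hqlen
  have hzlen : 1 ≤ (psiL a z).length := List.length_pos_iff.mpr (psiL_ne_nil a hzne)
  have hsrevlen : (psiL a s.reverse).length = (psiL a s).length := by
    have := congrArg List.length (psiL_reverse a s)
    simpa using this.symm
  set C : List A := psiL a q ++ [a] with hCdef
  have hCpal : C.reverse = C := by
    rw [hCdef, psiL_reverse, hqpal]
  have hClen : C.length = (psiL a s).length + (psiL a z).length + (psiL a s).length + 1 := by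
    have h1 : psiL a q = psiL a s ++ psiL a z ++ psiL a s.reverse := by
      rw [hqd, psiL_append, psiL_append]
    have h2 := congrArg List.length h1
    simp only [List.length_append] at h2
    simp only [hCdef, List.length_append, List.length_cons, List.length_nil]
    omega
  have hqlen2 : q.length = s.length + z.length + s.length := by rw [hqd]; simp; omega
  have hxlen2 : x.length = s.length + z.length := by rw [hsz]; simp
  set x₀ : List A := psiL a p ++ [a] ++ [b] with hx₀def
  show palPlus x₀ = C
  by_cases hb : b = a
  · -- case b = a
    have hx₀ : x₀ = psiL a x ++ [a] := by
      rw [hx₀def, hxdef, psiL_append, psiL_singleton, if_pos hb, hb]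
    have hψx : psiL a x = psiL a s ++ psiL a z := by rw [hsz, psiL_append]
    have hx₀len : x₀.length = (psiL a s).length + (psiL a z).length + 1 := by
      rw [hx₀]
      have := congrArg List.length hψx
      simp at this ⊢
      omega
    have hx₀C : x₀ <+: C := by
      obtain ⟨y, hy⟩ := hqpre
      rw [hCdef, ← hy, psiL_append, hx₀]
      rcases eq_or_ne y [] with hy0 | hy0
      · simp [hy0, psiL_nil]
      · obtain ⟨t, ht⟩ := psiL_head a hy0
        rw [ht, List.append_assoc]
        exact ⟨t ++ [a], by simp⟩
    apply palPlus_eq_of_bound hCpal hx₀C (N := (psiL a z).length + 1) (by omega)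
    intro z₁ hz₁suf hz₁pal hz₁ne
    obtain ⟨r, hr⟩ := hz₁suf
    rw [hx₀] at hr
    have hz₁pos : 1 ≤ z₁.length := List.length_pos_iff.mpr hz₁ne
    have hrlen : r.length ≤ (psiL a x).length := by
      have := congrArg List.length hr
      simp at this
      omega
    have hz₁eq : z₁ = (psiL a x).drop r.length ++ [a] := by
      have h1 : z₁ = (r ++ z₁).drop r.length := by simp
      rw [hr] at h1
      rw [h1, List.drop_append, Nat.sub_eq_zero_of_le hrlen]
      rfl
    set ζ : List A := (psiL a x).drop r.length with hζd
    rcases eq_or_ne ζ [] with hζ0 | hζ0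
    · have : z₁.length = 1 := by rw [hz₁eq, hζ0]; rfl
      omega
    · have hζsuf : ζ <:+ psiL a x := List.drop_suffix _ _
      have hζhead : ζ.head? = some a := by
        have h1 : z₁.head? = z₁.getLast? := by
          conv_lhs => rw [← hz₁pal]
          rw [List.head?_reverse]
        have h2 : z₁.getLast? = some a := by rw [hz₁eq]; exact List.getLast?_concat
        have h3 : z₁.head? = ζ.head? := by
          obtain ⟨c, ζ', hc⟩ := List.exists_cons_of_ne_nil hζ0
          rw [hz₁eq, hc]
          rfl
        rw [← h3, h1, h2]
      obtain ⟨t, htsuf, hteq⟩ := psiL_suffix a x hζsuf hζ0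
      rw [if_pos hζhead] at hteq
      have hz₁t : z₁ = psiL a t ++ [a] := by rw [hz₁eq, ← hteq]
      have htpal : t.reverse = t := by
        apply psiL_injOn a
        have h4 : (psiL a t ++ [a]).reverse = psiL a t ++ [a] := by
          rw [← hz₁t, hz₁pal]
        rw [psiL_reverse] at h4
        exact List.append_cancel_right h4
      have htz : t.length ≤ z.length := by
        have h5 := palPlus_min_of_pal_suffix htsuf htpal
        rw [← hqdef] at h5
        have h8 : t.length ≤ x.length := htsuf.length_le
        omega
      have h9 : t <:+ z := _root_.suffix_of_suffix_length_le htsuf ⟨s, hsz.symm⟩ htz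
      have h10 := psiL_length_le_of_suffix a h9
      have h11 : z₁.length = (psiL a t).length + 1 := by rw [hz₁t]; simp
      omega
  · -- case b ≠ a
    have hx₀ : x₀ = psiL a x := by
      rw [hx₀def, hxdef, psiL_append, psiL_singleton, if_neg hb, List.append_assoc]
      rfl
    have hψx : psiL a x = psiL a s ++ psiL a z := by rw [hsz, psiL_append]
    have hx₀len : x₀.length = (psiL a s).length + (psiL a z).length := by
      rw [hx₀]
      have := congrArg List.length hψx
      simpa using this
    have hx₀C : x₀ <+: C := by
      obtain ⟨y, hy⟩ := hqpre
      rw [hCdef, ← hy, psiL_append, hx₀, List.append_assoc]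
      exact ⟨psiL a y ++ [a], rfl⟩
    apply palPlus_eq_of_bound hCpal hx₀C (N := (psiL a z).length - 1) (by omega)
    intro z₁ hz₁suf hz₁pal hz₁ne
    rw [hx₀] at hz₁suf
    have hz₁last : z₁.getLast? = some b := by
      obtain ⟨r, hr⟩ := hz₁suf
      have h1 : z₁.getLast? = (r ++ z₁).getLast? := (List.getLast?_append_of_ne_nil r hz₁ne).symm
      rw [h1, hr, hxdef, psiL_append, psiL_singleton, if_neg hb]
      simp
    have hz₁head : z₁.head? ≠ some a := by
      have h1 : z₁.head? = z₁.getLast? := by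
        conv_lhs => rw [← hz₁pal]
        rw [List.head?_reverse]
      rw [h1, hz₁last]
      simp [hb]
    obtain ⟨t, htsuf, hteq⟩ := psiL_suffix a x hz₁suf hz₁ne
    rw [if_neg hz₁head] at hteq
    have htpal : t.reverse = t := by
      apply psiL_injOn a
      have h4 : (psiL a t ++ [a]).reverse = psiL a t ++ [a] := by
        rw [hteq]
        simp [hz₁pal]
      rw [psiL_reverse] at h4
      exact List.append_cancel_right h4
    have htz : t.length ≤ z.length := by
      have h5 := palPlus_min_of_pal_suffix htsuf htpal
      rw [← hqdef] at h5
      have h8 : t.length ≤ x.length := htsuf.length_le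
      omega
    have h9 : t <:+ z := _root_.suffix_of_suffix_length_le htsuf ⟨s, hsz.symm⟩ htz
    have h10 := psiL_length_le_of_suffix a h9
    have h11 : z₁.length + 1 = (psiL a t).length := by
      rw [hteq]
      rfl
    omega

/-- Pal(a·v) = ψ_a(Pal(v))·a. -/
theorem pal_cons (a : A) (v : List A) : pal (a :: v) = psiL a (pal v) ++ [a] := by
  induction v using List.reverseRecOn with
  | nil =>
    show pal ([] ++ [a]) = psiL a (pal []) ++ [a]
    rw [pal_concat, pal_nil, psiL_nil, List.nil_append]
    exact palPlus_of_palindrome (by simp)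
  | append_singleton v b ih =>
    have h1 : a :: (v ++ [b]) = (a :: v) ++ [b] := rfl
    rw [h1, pal_concat, ih, pal_concat]
    exact key_palPlus a b (pal_palindrome v)

/-- Justin's formula. -/
theorem justin (v : List A) (b : A) : pal (v ++ [b]) = psiW v [b] ++ pal v := by
  induction v with
  | nil =>
    rw [pal_nil, psiW_nil]
    show pal ([] ++ [b]) = [b] ++ []
    rw [pal_concat, pal_nil, List.nil_append, List.append_nil]
    exact palPlus_of_palindrome (by simp)
  | cons a v' ih =>
    have h1 : (a :: v') ++ [b] = a :: (v' ++ [b]) := rfl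
    rw [h1, pal_cons, ih, psiL_append, pal_cons, psiW_cons, List.append_assoc]

end EpiAux


/-- either σ(a_min) is a suffix of every σ(a), or it is a prefix
of every σ(a). -/
theorem minletter_suffix_or_prefix {A : Type*} [Fintype A] [DecidableEq A]
    (hA : 1 < Fintype.card A) (u : List A) (hu : u ≠ []) (π : Equiv.Perm A)
    (w : List A) (hw : w <+: pal u)
    (σ : List A → List A) (hσhom : IsListHom σ)
    (hσ : ∀ a : A, psiW u [π a] ++ w = w ++ σ [a])
    (amin : A) (hmin : ∀ a : A, a ≠ amin → (σ [amin]).length < (σ [a]).length) :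
    (∀ a : A, σ [amin] <:+ σ [a]) ∨ (∀ a : A, σ [amin] <+: σ [a]) := by
  classical
  obtain ⟨u', c₀, rfl⟩ : ∃ u' c₀, u = u' ++ [c₀] := by
    rcases List.eq_nil_or_concat u with h | ⟨L, b, h⟩
    · exact absurd h hu
    · exact ⟨L, b, by simpa using h⟩
  set m : List A := psiW u' [c₀] with hm
  have hmne : m ≠ [] := psiW_ne_nil u' (by simp)
  have hm1 : 1 ≤ m.length := List.length_pos_iff.mpr hmne
  have himgc : psiW (u' ++ [c₀]) [c₀] = m := by
    rw [psiW_concat, psiL_singleton, if_pos rfl]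
  have himg : ∀ b, b ≠ c₀ → psiW (u' ++ [c₀]) [b] = m ++ psiW u' [b] := by
    intro b hb
    rw [psiW_concat, psiL_singleton, if_neg hb]
    have h : ([c₀, b] : List A) = [c₀] ++ [b] := rfl
    rw [h, psiW_append]
  have hlen : ∀ a : A, (σ [a]).length = (psiW (u' ++ [c₀]) [π a]).length := by
    intro a
    have := congrArg List.length (hσ a)
    simp at this
    omega
  have hπ : π amin = c₀ := by
    by_contra hne
    have ha₁ : π.symm c₀ ≠ amin := fun h => hne (by rw [← h]; exact π.apply_symm_apply c₀)
    have h1 := hmin (π.symm c₀) ha₁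
    have h2 : (σ [π.symm c₀]).length = m.length := by
      rw [hlen, Equiv.apply_symm_apply, himgc]
    have h3 : (σ [amin]).length = m.length + (psiW u' [π amin]).length := by
      rw [hlen, himg _ hne]; simp
    have h4 : 1 ≤ (psiW u' [π amin]).length :=
      List.length_pos_iff.mpr (psiW_ne_nil u' (by simp))
    omega
  set s : List A := σ [amin] with hsdef
  have hs : m ++ w = w ++ s := by rw [hsdef, ← hσ amin, hπ, himgc]
  have hslen : s.length = m.length := by
    have := congrArg List.length hs; simp at this; omega
  set P' : List A := pal u' with hP'
  have hP'pal : P'.reverse = P' := pal_palindrome u'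
  have hP : pal (u' ++ [c₀]) = m ++ P' := justin u' c₀
  have hPrev : pal (u' ++ [c₀]) = P' ++ m.reverse := by
    conv_lhs => rw [← pal_palindrome (u' ++ [c₀]), hP]
    rw [List.reverse_append, hP'pal]
  have hP'P : P' <+: pal (u' ++ [c₀]) := ⟨m.reverse, hPrev.symm⟩
  have hmP' : m.length ≤ P'.length + 1 := by
    have h1 := palPlus_length_le (x := P' ++ [c₀]) (by simp)
    rw [← pal_concat] at h1
    have h2 := congrArg List.length hP
    simp at h1 h2
    omega
  by_cases hcase : w.length ≤ P'.length
  · right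
    intro a
    rcases eq_or_ne (π a) c₀ with hb | hb
    · have h1 : w ++ σ [a] = w ++ s := by rw [← hσ a, hb, himgc, hs]
      rw [List.append_cancel_left h1]
    · have hwP' : w <+: P' := prefix_of_prefix_length_le hw hP'P hcase
      have hQ : pal (u' ++ [π a]) = psiW u' [π a] ++ P' := justin u' (π a)
      have hwQ : w <+: pal (u' ++ [π a]) := hwP'.trans (pal_prefix_concat u' (π a))
      have h2 : psiW u' [π a] ++ w <+: pal (u' ++ [π a]) := by
        rw [hQ]; exact (List.prefix_append_right_inj _).mpr hwP'
      have h3 : w <+: psiW u' [π a] ++ w :=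
        prefix_of_prefix_length_le hwQ h2 (by simp)
      have h4 : m ++ w <+: m ++ (psiW u' [π a] ++ w) :=
        (List.prefix_append_right_inj m).mpr h3
      have h5 : m ++ (psiW u' [π a] ++ w) = w ++ σ [a] := by
        rw [← List.append_assoc, ← himg _ hb, hσ a]
      rw [h5, hs] at h4
      exact (List.prefix_append_right_inj w).mp h4
  · left
    intro a
    push_neg at hcase
    obtain ⟨v, hv⟩ : P' <+: w := prefix_of_prefix_length_le hP'P hw (le_of_lt hcase)
    have hvm : v <+: m.reverse := by
      have h1 : P' ++ v <+: P' ++ m.reverse := by rw [hv, ← hPrev]; exact hw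
      exact (List.prefix_append_right_inj P').mp h1
    have hvlen : v.length ≤ m.length := by simpa using hvm.length_le
    have hvpos : 1 ≤ v.length := by
      have := congrArg List.length hv; simp at this; omega
    have hvtake : v = m.reverse.take v.length := List.prefix_iff_eq_take.mp hvm
    have hvm2 : v ++ m.reverse.drop v.length = m.reverse := by
      conv_rhs => rw [← List.take_append_drop v.length m.reverse, ← hvtake]
    have hsval : s = m.reverse.drop v.length ++ v := by
      have h1 : w ++ (m.reverse.drop v.length ++ v) = w ++ s := by
        rw [← hs]
        conv_lhs => rw [← hv]
        conv_rhs => rw [← hv]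
        calc (P' ++ v) ++ (m.reverse.drop v.length ++ v)
            = (P' ++ (v ++ m.reverse.drop v.length)) ++ v := by simp [List.append_assoc]
          _ = (P' ++ m.reverse) ++ v := by rw [hvm2]
          _ = (m ++ P') ++ v := by rw [← hPrev, hP]
          _ = m ++ (P' ++ v) := by simp [List.append_assoc]
      exact (List.append_cancel_left h1).symm
    rcases eq_or_ne (π a) c₀ with hb | hb
    · have h1 : w ++ σ [a] = w ++ s := by rw [← hσ a, hb, himgc, hs]
      rw [List.append_cancel_left h1]
    · have hQ : pal (u' ++ [π a]) = psiW u' [π a] ++ P' := justin u' (π a)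
      have hQpal := pal_palindrome (u' ++ [π a])
      have hwσ : w ++ σ [a] = m ++ pal (u' ++ [π a]) ++ v := by
        rw [← hσ a, himg _ hb, hQ]
        conv_lhs => rw [← hv]
        simp [List.append_assoc]
      have hkP' : m.length - v.length ≤ P'.length := by omega
      have hrd : m.reverse.drop v.length = (m.take (m.length - v.length)).reverse := by
        rw [List.reverse_take]
        congr 1
        omega
      have htake : m.take (m.length - v.length) <+: pal (u' ++ [π a]) := by
        have e1 : m.take (m.length - v.length) = (m ++ P').take (m.length - v.length) :=
          (List.take_append_of_le_length (by omega)).symm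
        have e2 : (P' ++ m.reverse).take (m.length - v.length)
            = P'.take (m.length - v.length) := List.take_append_of_le_length hkP'
        rw [e1, ← hP, hPrev, e2]
        exact (List.take_prefix _ _).trans (pal_prefix_concat u' (π a))
      have hsufQ : m.reverse.drop v.length <:+ pal (u' ++ [π a]) := by
        rw [hrd]
        have h2 : (m.take (m.length - v.length)).reverse <:+ (pal (u' ++ [π a])).reverse :=
          List.reverse_suffix.mpr htake
        rw [hQpal] at h2
        exact h2
      have hsfull : s <:+ w ++ σ [a] := by
        rw [hwσ, hsval]
        obtain ⟨r, hr⟩ := hsufQ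
        exact ⟨m ++ r, by rw [← hr]; simp [List.append_assoc]⟩
      have hσalen : m.length ≤ (σ [a]).length := by
        rw [hlen, himg _ hb]; simp
      exact _root_.suffix_of_suffix_length_le hsfull (List.suffix_append w (σ [a]))
        (by omega)
end
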